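/- Let (S, V) be a complete semiring-semimodule pair and let M ∈ (S^{n×n})^{p*×p*} be a restricted one-counter (roc) matrix with counter symbol p. Then (M^ω)_{p²} = (M^ω)_p + (M*)_{p,ε} · (M^ω)_p. -/
import Mathlib


/-!
Common definitions: complete semirings with infinite sums, complete
semiring-semimodule pairs with infinite products, restricted one-counter
(roc) matrices, their star and omega blocks, power series over finite and
infinite words, weighted ω-restricted one-counter automata, and the mixed
context-free grammars obtained by the triple-pair construction.
-/

/-- The data of a semiring together with sums over arbitrary index sets. -/
structure CSOps (S : Type) where
  add : S → S → S
  mul : S → S → S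
  zero : S
  one : S
  iSum : ∀ {ι : Type}, (ι → S) → S

namespace CSOps

variable {S : Type}

/-- Powers `a^m`. -/
def pow (R : CSOps S) (a : S) : ℕ → S
  | 0 => R.one
  | m + 1 => R.mul a (R.pow a m)

/-- The star operation of a complete starsemiring: `a* = Σ_{m≥0} a^m`. -/
def star (R : CSOps S) (a : S) : S := R.iSum fun m : ℕ => R.pow a m

/-- Finite sums of lists of elements. -/
def listSum (R : CSOps S) (l : List S) : S := l.foldr R.add R.zero

/-- Finite (ordered) products of lists of elements. -/
def listProd (R : CSOps S) (l : List S) : S := l.foldr R.mul R.one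

/-- The ordered product `s_a · s_{a+1} ⋯ s_{b-1}`. -/
def rangeProd (R : CSOps S) (s : ℕ → S) (a b : ℕ) : S :=
  R.listProd ((List.range' a (b - a)).map s)

/-- `R` is a complete semiring: the operations form a semiring, the infinite
sums extend the finite ones, are associative and commutative (compatible with
arbitrary partitions of the index set) and satisfy both distributive laws. -/
structure IsComplete (R : CSOps S) : Prop where
  add_assoc : ∀ a b c, R.add (R.add a b) c = R.add a (R.add b c)
  add_comm : ∀ a b, R.add a b = R.add b a
  zero_add : ∀ a, R.add R.zero a = a
  mul_assoc : ∀ a b c, R.mul (R.mul a b) c = R.mul a (R.mul b c)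
  one_mul : ∀ a, R.mul R.one a = a
  mul_one : ∀ a, R.mul a R.one = a
  zero_mul : ∀ a, R.mul R.zero a = R.zero
  mul_zero : ∀ a, R.mul a R.zero = R.zero
  left_distrib : ∀ a b c, R.mul a (R.add b c) = R.add (R.mul a b) (R.mul a c)
  right_distrib : ∀ a b c, R.mul (R.add a b) c = R.add (R.mul a c) (R.mul b c)
  iSum_empty : ∀ {ι : Type} (f : ι → S), IsEmpty ι → R.iSum f = R.zero
  iSum_single : ∀ {ι : Type} (f : ι → S) (i₀ : ι), (∀ i, i = i₀) → R.iSum f = f i₀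
  iSum_pair : ∀ {ι : Type} (f : ι → S) (i₀ i₁ : ι), i₀ ≠ i₁ → (∀ i, i = i₀ ∨ i = i₁) →
      R.iSum f = R.add (f i₀) (f i₁)
  iSum_partition : ∀ {ι κ : Type} (g : ι → κ) (f : ι → S),
      R.iSum (fun j : κ => R.iSum (fun i : {i : ι // g i = j} => f i.1)) = R.iSum f
  mul_iSum : ∀ {ι : Type} (c : S) (f : ι → S), R.mul c (R.iSum f) = R.iSum fun i => R.mul c (f i)
  iSum_mul : ∀ {ι : Type} (c : S) (f : ι → S), R.mul (R.iSum f) c = R.iSum fun i => R.mul (f i) c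

/-- `R` is a continuous starsemiring: it is complete and every infinite sum is
the least upper bound, with respect to the natural order `a ≤ b ↔ ∃ c, a + c = b`,
of the sums over the finite subfamilies. -/
structure IsContinuous (R : CSOps S) : Prop where
  complete : R.IsComplete
  finsumLe : ∀ {ι : Type} (f : ι → S) (l : List ι), l.Nodup →
      ∃ c, R.add (R.listSum (l.map f)) c = R.iSum f
  iSumLeast : ∀ {ι : Type} (f : ι → S) (b : S),
      (∀ l : List ι, l.Nodup → ∃ c, R.add (R.listSum (l.map f)) c = b) →
      ∃ c, R.add (R.iSum f) c = b

end CSOps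

/-- The data of a left `S`-semimodule `V` with sums over arbitrary index sets and
an infinite product operation mapping infinite sequences over `S` to `V`. -/
structure CPOps (S V : Type) where
  vadd : V → V → V
  vzero : V
  smul : S → V → V
  vSum : ∀ {ι : Type}, (ι → V) → V
  iProd : (ℕ → S) → V

namespace CPOps

variable {S V : Type}

/-- `(S, V)` (with operations `R`, `P`) is a complete semiring-semimodule pair. -/
structure IsComplete (R : CSOps S) (P : CPOps S V) : Prop where
  vadd_assoc : ∀ u v w, P.vadd (P.vadd u v) w = P.vadd u (P.vadd v w)
  vadd_comm : ∀ u v, P.vadd u v = P.vadd v u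
  vzero_vadd : ∀ v, P.vadd P.vzero v = v
  mul_smul : ∀ a b v, P.smul (R.mul a b) v = P.smul a (P.smul b v)
  one_smul : ∀ v, P.smul R.one v = v
  add_smul : ∀ a b v, P.smul (R.add a b) v = P.vadd (P.smul a v) (P.smul b v)
  smul_vadd : ∀ a u v, P.smul a (P.vadd u v) = P.vadd (P.smul a u) (P.smul a v)
  zero_smul : ∀ v, P.smul R.zero v = P.vzero
  smul_vzero : ∀ a, P.smul a P.vzero = P.vzero
  vSum_empty : ∀ {ι : Type} (f : ι → V), IsEmpty ι → P.vSum f = P.vzero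
  vSum_single : ∀ {ι : Type} (f : ι → V) (i₀ : ι), (∀ i, i = i₀) → P.vSum f = f i₀
  vSum_pair : ∀ {ι : Type} (f : ι → V) (i₀ i₁ : ι), i₀ ≠ i₁ → (∀ i, i = i₀ ∨ i = i₁) →
      P.vSum f = P.vadd (f i₀) (f i₁)
  vSum_partition : ∀ {ι κ : Type} (g : ι → κ) (f : ι → V),
      P.vSum (fun j : κ => P.vSum (fun i : {i : ι // g i = j} => f i.1)) = P.vSum f
  smul_vSum : ∀ {ι : Type} (a : S) (f : ι → V),
      P.smul a (P.vSum f) = P.vSum fun i => P.smul a (f i)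
  iSum_smul : ∀ {ι : Type} (f : ι → S) (v : V),
      P.smul (R.iSum f) v = P.vSum fun i => P.smul (f i) v
  iProd_regroup : ∀ (s : ℕ → S) (e : ℕ → ℕ), e 0 = 0 → Monotone e →
      P.iProd s = P.iProd fun i => R.rangeProd s (e i) (e (i + 1))
  smul_iProd_shift : ∀ s : ℕ → S, P.smul (s 0) (P.iProd fun i => s (i + 1)) = P.iProd s
  iProd_iSum : ∀ (I : ℕ → Type) (s : ∀ j, I j → S),
      P.iProd (fun j => R.iSum (s j)) = P.vSum fun f : (∀ j, I j) => P.iProd fun j => s j (f j)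

end CPOps

/-! ### Matrices of blocks indexed by the counter contents `p^i ↔ i` -/

/-- An `n × n` block of weights. -/
abbrev Blk (n : ℕ) (S : Type) := Fin n → Fin n → S

def bZero {S : Type} (R : CSOps S) {n : ℕ} : Blk n S := fun _ _ => R.zero

def bOne {S : Type} (R : CSOps S) {n : ℕ} : Blk n S :=
  fun i j => if i = j then R.one else R.zero

def bAdd {S : Type} (R : CSOps S) {n : ℕ} (X Y : Blk n S) : Blk n S :=
  fun i j => R.add (X i j) (Y i j)

def bMul {S : Type} (R : CSOps S) {n : ℕ} (X Y : Blk n S) : Blk n S :=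
  fun i j => R.iSum fun l : Fin n => R.mul (X i l) (Y l j)

def bPow {S : Type} (R : CSOps S) {n : ℕ} (X : Blk n S) : ℕ → Blk n S
  | 0 => bOne R
  | m + 1 => bMul R X (bPow R X m)

/-- A matrix in `(S^{n×n})^{p* × p*}`: rows and columns are indexed by the words
`p^i` (identified with `i : ℕ`) and the entries are `n × n` blocks over `S`. -/
abbrev IMat (n : ℕ) (S : Type) := ℕ → ℕ → Blk n S

def iMatMul {S : Type} (R : CSOps S) {n : ℕ} (M N : IMat n S) : IMat n S :=
  fun i j => fun a b => R.iSum fun l : ℕ => bMul R (M i l) (N l j) a b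

def iMatOne {S : Type} (R : CSOps S) {n : ℕ} : IMat n S :=
  fun i j => if i = j then bOne R else bZero R

def iMatPow {S : Type} (R : CSOps S) {n : ℕ} (M : IMat n S) : ℕ → IMat n S
  | 0 => iMatOne R
  | m + 1 => iMatMul R M (iMatPow R M m)

/-- `iStar R M i j` is the block `(M*)_{p^i, p^j} = Σ_{m≥0} (M^m)_{p^i, p^j}`. -/
def iStar {S : Type} (R : CSOps S) {n : ℕ} (M : IMat n S) : IMat n S :=
  fun i j => fun a b => R.iSum fun m : ℕ => iMatPow R M m i j a b

/-- `M` is a restricted one-counter (roc) matrix (with counter symbol `p`):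
there are blocks `A = M_{p,p²}`, `C = M_{p,p}`, `B = M_{p,ε}` with
`M_{p^k,p^{k+1}} = A`, `M_{p^k,p^k} = C`, `M_{p^k,p^{k-1}} = B` for all `k ≥ 1`,
and all other blocks are `0`. -/
def IsRoc {S : Type} (R : CSOps S) {n : ℕ} (M : IMat n S) : Prop :=
  (∀ k : ℕ, 1 ≤ k → M k (k + 1) = M 1 2 ∧ M k k = M 1 1 ∧ M k (k - 1) = M 1 0) ∧
  (∀ i j : ℕ, (i = 0 ∨ (j ≠ i + 1 ∧ j ≠ i ∧ j + 1 ≠ i)) → M i j = bZero R)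

/-! ### Vectors over the semimodule -/

def vecAdd {S V : Type} (P : CPOps S V) {n : ℕ} (u v : Fin n → V) : Fin n → V :=
  fun a => P.vadd (u a) (v a)

/-- A block acting on a vector of semimodule elements: `(X z)_a = Σ_l X_{a l} z_l`. -/
def matVec {S V : Type} (P : CPOps S V) {n : ℕ} (X : Blk n S) (v : Fin n → V) : Fin n → V :=
  fun a => P.vSum fun l : Fin n => P.smul (X a l) (v l)

/-- A row vector acting on a column vector of semimodule elements: `I z = Σ_m I_m z_m`. -/
def rowAct {S V : Type} (P : CPOps S V) {n : ℕ} (Iv : Fin n → S) (v : Fin n → V) : V :=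
  P.vSum fun m : Fin n => P.smul (Iv m) (v m)

/-- The scalar `I · X · P = Σ_{m₁,m₂} I_{m₁} X_{m₁ m₂} P_{m₂}`. -/
def tripleProd {S : Type} (R : CSOps S) {n : ℕ} (Iv : Fin n → S) (X : Blk n S)
    (Pv : Fin n → S) : S :=
  R.iSum fun q : Fin n × Fin n => R.mul (Iv q.1) (R.mul (X q.1 q.2) (Pv q.2))

/-- The sequence of weights along an infinite path starting in row block `p^i`,
state `j`, and then visiting the blocks `p^{hs 0}, p^{hs 1}, …` in states
`js 0, js 1, …`. -/
def pathEntry {S : Type} {n : ℕ} (M : IMat n S) (i : ℕ) (j : Fin n)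
    (hs : ℕ → ℕ) (js : ℕ → Fin n) : ℕ → S
  | 0 => M i (hs 0) j (js 0)
  | t + 1 => M (hs t) (hs (t + 1)) (js t) (js (t + 1))

/-- The block `(M^ω)_{p^i}` of the column vector `M^ω ∈ (V^n)^{p*}`:
`((M^ω)_{p^i})_j` is the sum over all infinite sequences of pushdown contents and
states of the infinite products of the corresponding entries of `M`. -/
def mOmega {S V : Type} (P : CPOps S V) {n : ℕ} (M : IMat n S) (i : ℕ) : Fin n → V :=
  fun j => P.vSum fun q : (ℕ → ℕ) × (ℕ → Fin n) => P.iProd (pathEntry M i j q.1 q.2)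

/-- `P_k`: the sequences of states (states `1,…,n` being represented by `Fin n`,
state `j+1` by `j : Fin n`) that are `≤ k` (i.e. have representative `< k`)
infinitely often — the Büchi condition with repeated states `{1, …, k}`. -/
def InPk (n k : ℕ) (js : ℕ → Fin n) : Prop := ∀ N : ℕ, ∃ t, N ≤ t ∧ (js t : ℕ) < k

/-- The block `(M^{ω,k})_{p^i}` of the column vector `M^{ω,k} ∈ (V^n)^{p*}`:
the sum over all infinite sequences `i₁, i₂, … ≥ 1` of pushdown contents and all
state sequences in `P_k` of the infinite products of the corresponding entries. -/
def mOmegaK {S V : Type} (P : CPOps S V) {n : ℕ} (M : IMat n S) (k : ℕ) (i : ℕ) :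
    Fin n → V :=
  fun j => P.vSum fun q : {q : (ℕ → ℕ) × (ℕ → Fin n) // (∀ t, 1 ≤ q.1 t) ∧ InPk n k q.2} =>
    P.iProd (pathEntry M i j q.1.1 q.1.2)

/-! ### The algebraic systems -/

/-- The right-hand side `A x x + C x + B` of the algebraic system
`x = M_{p,p²} x x + M_{p,p} x + M_{p,ε}`. -/
def quadRhs {S : Type} (R : CSOps S) {n : ℕ} (Ablk Cblk Bblk X : Blk n S) : Blk n S :=
  bAdd R (bAdd R (bMul R Ablk (bMul R X X)) (bMul R Cblk X)) Bblk

/-- `X` is a solution of `x = A x x + C x + B`. -/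
def IsQuadSol {S : Type} (R : CSOps S) {n : ℕ} (Ablk Cblk Bblk X : Blk n S) : Prop :=
  X = quadRhs R Ablk Cblk Bblk X

/-- The matrix `M_{p,p²} + M_{p,p²}(M*)_{p,ε} + M_{p,p}`. -/
def linMat {S : Type} (R : CSOps S) {n : ℕ} (M : IMat n S) : Blk n S :=
  bAdd R (bAdd R (M 1 2) (bMul R (M 1 2) (iStar R M 1 0))) (M 1 1)

/-- `z` is a solution of the linear equation
`z = (M_{p,p²} + M_{p,p²}(M*)_{p,ε} + M_{p,p}) z` over `V^n`. -/
def IsLinSol {S V : Type} (R : CSOps S) (P : CPOps S V) {n : ℕ} (M : IMat n S)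
    (z : Fin n → V) : Prop :=
  z = matVec P (linMat R M) z

/-- The right-hand side `A z + (A x) z + C z` of the linear system
`z = M_{p,p²} z + M_{p,p²} x z + M_{p,p} z`. -/
def zRhs {S V : Type} (R : CSOps S) (P : CPOps S V) {n : ℕ} (Ablk Cblk x : Blk n S)
    (z : Fin n → V) : Fin n → V :=
  vecAdd P (vecAdd P (matVec P Ablk z) (matVec P (bMul R Ablk x) z)) (matVec P Cblk z)

/-- The behavior `‖C‖ = (I (M*)_{p,ε} P, I (M^{ω,k})_p)` of an
`ω`-restricted one-counter automaton. -/
def rocBehavior {S V : Type} (R : CSOps S) (P : CPOps S V) {n : ℕ} (M : IMat n S)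
    (Iv Pv : Fin n → S) (k : ℕ) : S × V :=
  (tripleProd R Iv (iStar R M 1 0) Pv, rowAct P Iv (mOmegaK P M k 1))

/-! ### Power series over finite and infinite words -/

open Classical in
/-- The complete semiring `S⟪Σ*⟫` of power series over finite words,
with the Cauchy product. -/
noncomputable def finOps {S : Type} (R : CSOps S) (A : Type) : CSOps (List A → S) where
  add s t := fun w => R.add (s w) (t w)
  mul s t := fun w =>
    R.iSum fun u : {u : List A × List A // u.1 ++ u.2 = w} => R.mul (s u.1.1) (t u.1.2)
  zero := fun _ => R.zero
  one := fun w => if w = [] then R.one else R.zero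
  iSum f := fun w => R.iSum fun i => f i w

/-- Concatenation of a finite word with an ω-word. -/
def wcat {A : Type} (u : List A) (v : ℕ → A) : ℕ → A :=
  fun t => if h : t < u.length then u.get ⟨t, h⟩ else v (t - u.length)

/-- Lengths of the partial concatenations of a sequence of finite words. -/
def flen {A : Type} (f : ℕ → List A) : ℕ → ℕ
  | 0 => 0
  | m + 1 => flen f m + (f m).length

/-- `f 0, f 1, f 2, …` is a factorization of the ω-word `w` into finite words:
the concatenation `f 0 · f 1 · ⋯` equals `w`. -/
def IsFact {A : Type} (f : ℕ → List A) (w : ℕ → A) : Prop :=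
  (∀ N : ℕ, ∃ m, N ≤ flen f m) ∧
  (∀ (m i : ℕ) (h : i < (f m).length), (f m).get ⟨i, h⟩ = w (flen f m + i))

/-- The complete semimodule pair operations on `(S⟪Σ*⟫, S⟪Σ^ω⟫)`, for a complete
star-omega semiring `S` given by `R` (sums) and `P0` (the infinite product of
the complete semiring-semimodule pair `(S, S)`). -/
def omOps {S : Type} (R : CSOps S) (P0 : CPOps S S) (A : Type) :
    CPOps (List A → S) ((ℕ → A) → S) where
  vadd s t := fun w => R.add (s w) (t w)
  vzero := fun _ => R.zero
  smul s t := fun w =>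
    R.iSum fun u : {u : List A × (ℕ → A) // wcat u.1 u.2 = w} => R.mul (s u.1.1) (t u.1.2)
  vSum f := fun w => R.iSum fun i => f i w
  iProd s := fun w =>
    R.iSum fun f : {f : ℕ → List A // IsFact f w} => P0.iProd fun j => s j (f.1 j)

/-- A series is a polynomial supported on `Σ ∪ {ε}`, i.e. an element of
`S⟨Σ ∪ {ε}⟩`: its coefficients vanish on words of length `≥ 2`. -/
def PolySupp {S : Type} (R : CSOps S) {A : Type} (s : List A → S) : Prop :=
  ∀ w : List A, 2 ≤ w.length → s w = R.zero

/-! ### The mixed context-free grammar of the triple-pair construction -/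

/-- Variables for finite derivations: `x₀` and the triples `[i, p, j]`. -/
inductive XVar (n : ℕ) where
  | x0 : XVar n
  | tr : Fin n → Fin n → XVar n

/-- Variables for infinite derivations: `z₀` and the pairs `[i, p]`. -/
inductive ZVar (n : ℕ) where
  | z0 : ZVar n
  | pr : Fin n → ZVar n

/-- Sentential forms over the variables for finite derivations and terminals. -/
abbrev SForm (n : ℕ) (A : Type) := List (XVar n ⊕ A)

/-- The productions `P_X` for finite derivations of the grammar `G_k`
constructed from a roc automaton with matrix blocks `M`, initial vector `Iv`
and final vector `Pv` (here `a, b` range over `Σ ∪ {ε}`, represented by words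
of length at most one). -/
inductive XProd {K : Type} (R : CSOps K) {n : ℕ} {A : Type} (M : IMat n (List A → K))
    (Iv Pv : Fin n → List A → K) : XVar n → SForm n A → Prop where
  | start (a b : List A) (m₁ m₂ : Fin n) : a.length ≤ 1 → b.length ≤ 1 →
      R.mul (Iv m₁ a) (Pv m₂ b) ≠ R.zero →
      XProd R M Iv Pv XVar.x0 (a.map Sum.inr ++ Sum.inl (XVar.tr m₁ m₂) :: b.map Sum.inr)
  | push (a : List A) (i j m₁ m₂ : Fin n) : a.length ≤ 1 → M 1 2 i m₁ a ≠ R.zero →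
      XProd R M Iv Pv (XVar.tr i j)
        (a.map Sum.inr ++ [Sum.inl (XVar.tr m₁ m₂), Sum.inl (XVar.tr m₂ j)])
  | stay (a : List A) (i j m : Fin n) : a.length ≤ 1 → M 1 1 i m a ≠ R.zero →
      XProd R M Iv Pv (XVar.tr i j) (a.map Sum.inr ++ [Sum.inl (XVar.tr m j)])
  | pop (a : List A) (i j : Fin n) : a.length ≤ 1 → M 1 0 i j a ≠ R.zero →
      XProd R M Iv Pv (XVar.tr i j) (a.map Sum.inr)

/-- The productions `P_Z` for infinite derivations: `ZProd R M Iv W α m` states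
that `W → α [m, p]` is a production, where `α` is the part of the right-hand
side over `X ∪ Σ` and `[m, p]` is the trailing variable for infinite derivations. -/
inductive ZProd {K : Type} (R : CSOps K) {n : ℕ} {A : Type} (M : IMat n (List A → K))
    (Iv : Fin n → List A → K) : ZVar n → SForm n A → Fin n → Prop where
  | init (a : List A) (m : Fin n) : a.length ≤ 1 → Iv m a ≠ R.zero →
      ZProd R M Iv ZVar.z0 (a.map Sum.inr) m
  | push (a : List A) (i m : Fin n) : a.length ≤ 1 → M 1 2 i m a ≠ R.zero →
      ZProd R M Iv (ZVar.pr i) (a.map Sum.inr) m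
  | pushTr (a : List A) (i m₁ m₂ : Fin n) : a.length ≤ 1 → M 1 2 i m₁ a ≠ R.zero →
      ZProd R M Iv (ZVar.pr i) (a.map Sum.inr ++ [Sum.inl (XVar.tr m₁ m₂)]) m₂
  | stay (a : List A) (i m : Fin n) : a.length ≤ 1 → M 1 1 i m a ≠ R.zero →
      ZProd R M Iv (ZVar.pr i) (a.map Sum.inr) m

/-- One leftmost derivation step: the leftmost variable is rewritten. -/
inductive LMStep {n : ℕ} {A : Type} (Px : XVar n → SForm n A → Prop) :
    SForm n A → SForm n A → Prop where
  | mk (u : List A) (X : XVar n) (β rest : SForm n A) : Px X β →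
      LMStep Px (u.map Sum.inr ++ Sum.inl X :: rest) (u.map Sum.inr ++ (β ++ rest))

/-- The finite-word part of the language of the grammar:
`{w ∈ Σ* | x₀ ⇒_L^* w}`. -/
def FinLang {K : Type} (R : CSOps K) {n : ℕ} {A : Type} (M : IMat n (List A → K))
    (Iv Pv : Fin n → List A → K) : Set (List A) :=
  {w | Relation.ReflTransGen (LMStep (XProd R M Iv Pv)) [Sum.inl XVar.x0] (w.map Sum.inr)}

/-- The set of finite leftmost derivations of the word `w` from `x₀`: lists of
sentential forms beginning with `x₀`, ending with `w`, each step being a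
leftmost rewriting by a production of `P_X`. -/
def finDerivSet {K : Type} (R : CSOps K) {n : ℕ} {A : Type} (M : IMat n (List A → K))
    (Iv Pv : Fin n → List A → K) (w : List A) : Set (List (SForm n A)) :=
  {l | l.Chain' (LMStep (XProd R M Iv Pv)) ∧ l.head? = some [Sum.inl XVar.x0] ∧
       l.getLast? = some (w.map Sum.inr)}

/-- The leftmost variable of a sentential form (the one rewritten in a leftmost
derivation step). -/
def leftVar {n : ℕ} {A : Type} (α : SForm n A) : Option (XVar n) :=
  (α.filterMap Sum.getLeft?).head?

/-- An infinite (leftmost) derivation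
`z₀ ⇒_L α₀[i₀,p] ⇒_L^* w₀[i₀,p] ⇒_L w₀α₁[i₁,p] ⇒_L^* w₀w₁[i₁,p] ⇒_L ⋯`:
the data of the states `i₀, i₁, …`, the sentential forms `α₀, α₁, …`, the
produced finite words `w₀, w₁, …` and the finite leftmost derivations
`α_m ⇒_L^* w_m`. -/
structure InfDeriv {K : Type} (R : CSOps K) {n : ℕ} {A : Type} (M : IMat n (List A → K))
    (Iv Pv : Fin n → List A → K) where
  iseq : ℕ → Fin n
  alph : ℕ → SForm n A
  wseq : ℕ → List A
  fder : ℕ → List (SForm n A)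
  hz0 : ZProd R M Iv ZVar.z0 (alph 0) (iseq 0)
  hz : ∀ m, ZProd R M Iv (ZVar.pr (iseq m)) (alph (m + 1)) (iseq (m + 1))
  hchain : ∀ m, (fder m).Chain' (LMStep (XProd R M Iv Pv))
  hhead : ∀ m, (fder m).head? = some (alph m)
  hlast : ∀ m, (fder m).getLast? = some ((wseq m).map Sum.inr)

/-- The infinite derivation produces the ω-word `w = w₀ w₁ w₂ ⋯`. -/
def InfDeriv.Produces {K : Type} {R : CSOps K} {n : ℕ} {A : Type}
    {M : IMat n (List A → K)} {Iv Pv : Fin n → List A → K}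
    (d : InfDeriv R M Iv Pv) (w : ℕ → A) : Prop :=
  IsFact d.wseq w

/-- The Büchi condition of an `(ω,k)`-derivation: the sequence of first
components of the variables rewritten (`i₀, i₁^1, …, i₁^{t₁}, i₁, i₂^1, …`)
lies in `P_k`, i.e. hits `{1, …, k}` (represented by `Fin`-values `< k`)
infinitely often. -/
def InfDeriv.Buchi {K : Type} {R : CSOps K} {n : ℕ} {A : Type}
    {M : IMat n (List A → K)} {Iv Pv : Fin n → List A → K}
    (d : InfDeriv R M Iv Pv) (k : ℕ) : Prop :=
  ∀ N : ℕ, ∃ m, N ≤ m ∧ ((d.iseq m : ℕ) < k ∨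
    ∃ α ∈ (d.fder m).dropLast, ∃ i j : Fin n,
      leftVar α = some (XVar.tr i j) ∧ (i : ℕ) < k)

/-- The infinite-word part of the language of the grammar `G_k`:
`{w ∈ Σ^ω | z₀ ⇒_L^{ω,k} w}`. -/
def InfLang {K : Type} (R : CSOps K) {n : ℕ} {A : Type} (M : IMat n (List A → K))
    (Iv Pv : Fin n → List A → K) (k : ℕ) : Set (ℕ → A) :=
  {w | ∃ d : InfDeriv R M Iv Pv, d.Produces w ∧ d.Buchi k}

/-! ### Computations of an ω-restricted one-counter automaton -/

/-- One computation step between instantaneous descriptions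
`(state, remaining input, counter)`. -/
def CompStep {K : Type} (R : CSOps K) {n : ℕ} {A : Type} (M : IMat n (List A → K)) :
    (Fin n × List A × ℕ) → (Fin n × List A × ℕ) → Prop := fun c c' =>
  ∃ a : List A, a.length ≤ 1 ∧ c.2.1 = a ++ c'.2.1 ∧ 1 ≤ c.2.2 ∧
    ((c'.2.2 = c.2.2 + 1 ∧ M 1 2 c.1 c'.1 a ≠ R.zero) ∨
     (c'.2.2 = c.2.2 ∧ M 1 1 c.1 c'.1 a ≠ R.zero) ∨
     (c'.2.2 + 1 = c.2.2 ∧ M 1 0 c.1 c'.1 a ≠ R.zero))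

/-- The set of finite computations on input `w`: from an initial instantaneous
description `(i, w, p)` with `I_i ≠ 0` to an accepting instantaneous
description `(j, ε, ε)` with `P_j ≠ 0`. -/
def finCompSet {K : Type} (R : CSOps K) {n : ℕ} {A : Type} (M : IMat n (List A → K))
    (Iv Pv : Fin n → List A → K) (w : List A) : Set (List (Fin n × List A × ℕ)) :=
  {l | l.Chain' (CompStep R M) ∧
       (∃ i : Fin n, Iv i ≠ (fun _ => R.zero) ∧ l.head? = some (i, w, 1)) ∧
       (∃ j : Fin n, Pv j ≠ (fun _ => R.zero) ∧ l.getLast? = some (j, [], 0))}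

/-- An infinite computation of the automaton starting in an initial
instantaneous description `(i, ·, p)` with `I_i ≠ 0`: the sequences of states,
counter values and read letters (`rd m ∈ Σ ∪ {ε}`). -/
structure InfComp {K : Type} (R : CSOps K) {n : ℕ} {A : Type} (M : IMat n (List A → K))
    (Iv : Fin n → List A → K) where
  st : ℕ → Fin n
  ct : ℕ → ℕ
  rd : ℕ → List A
  hI : Iv (st 0) ≠ fun _ => R.zero
  hct0 : ct 0 = 1
  hlen : ∀ m, (rd m).length ≤ 1
  hpos : ∀ m, 1 ≤ ct m
  hstep : ∀ m,
    (ct (m + 1) = ct m + 1 ∧ M 1 2 (st m) (st (m + 1)) (rd m) ≠ R.zero) ∨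
    (ct (m + 1) = ct m ∧ M 1 1 (st m) (st (m + 1)) (rd m) ≠ R.zero) ∨
    (ct (m + 1) + 1 = ct m ∧ M 1 0 (st m) (st (m + 1)) (rd m) ≠ R.zero)

/-- The infinite computation reads exactly the ω-word `w`. -/
def InfComp.Reads {K : Type} {R : CSOps K} {n : ℕ} {A : Type}
    {M : IMat n (List A → K)} {Iv : Fin n → List A → K}
    (d : InfComp R M Iv) (w : ℕ → A) : Prop :=
  IsFact d.rd w

/-- The infinite computation visits the repeated states `{1, …, k}` infinitely
often. -/
def InfComp.Buchi {K : Type} {R : CSOps K} {n : ℕ} {A : Type}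
    {M : IMat n (List A → K)} {Iv : Fin n → List A → K}
    (d : InfComp R M Iv) (k : ℕ) : Prop :=
  ∀ N : ℕ, ∃ m, N ≤ m ∧ (d.st m : ℕ) < k

/-! ### The complete star-omega semirings `𝔹` and `ℕ^∞` -/

open Classical in
/-- The complete semiring `𝔹 = ({0,1}, ∨, ∧, *, 0, 1)`. -/
noncomputable def boolCS : CSOps Bool where
  add a b := a || b
  mul a b := a && b
  zero := false
  one := true
  iSum f := decide (∃ i, f i = true)

open Classical in
/-- The complete semiring-semimodule pair `(𝔹, 𝔹)`, with the infinite product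
making `𝔹` a complete star-omega semiring. -/
noncomputable def boolCP : CPOps Bool Bool where
  vadd a b := a || b
  vzero := false
  smul a b := a && b
  vSum f := decide (∃ i, f i = true)
  iProd s := decide (∀ i, s i = true)

/-- The complete semiring `ℕ^∞ = (ℕ ∪ {∞}, +, ·, *, 0, 1)`: infinite sums are
the suprema of the finite partial sums. -/
noncomputable def enatCS : CSOps ℕ∞ where
  add a b := a + b
  mul a b := a * b
  zero := 0
  one := 1
  iSum {ι} f := ⨆ F : Finset ι, ∑ i ∈ F, f i

open Classical in
/-- The complete semiring-semimodule pair `(ℕ^∞, ℕ^∞)`, with the infinite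
product making `ℕ^∞` a complete star-omega semiring. -/
noncomputable def enatCP : CPOps ℕ∞ ℕ∞ where
  vadd a b := a + b
  vzero := 0
  smul a b := a * b
  vSum {ι} f := ⨆ F : Finset ι, ∑ i ∈ F, f i
  iProd s := if ∃ i, s i = 0 then 0 else ⨆ m : ℕ, ∏ i ∈ Finset.range m, s i

/-! ### Auxiliary lemmas for Statement 2 -/

section Aux

variable {S V : Type} {R : CSOps S} {P : CPOps S V}

lemma iSum_congr (R : CSOps S) {ι : Type} {f g : ι → S} (h : ∀ i, f i = g i) :
    R.iSum f = R.iSum g := congrArg R.iSum (funext h)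

lemma vSum_congr (P : CPOps S V) {ι : Type} {f g : ι → V} (h : ∀ i, f i = g i) :
    P.vSum f = P.vSum g := congrArg P.vSum (funext h)

lemma r_add_zero (hR : R.IsComplete) (a : S) : R.add a R.zero = a := by
  rw [hR.add_comm, hR.zero_add]

lemma vadd_vzero (hP : P.IsComplete R) (v : V) : P.vadd v P.vzero = v := by
  rw [hP.vadd_comm, hP.vzero_vadd]

lemma iSum_zero (hR : R.IsComplete) {ι : Type} :
    R.iSum (fun _ : ι => R.zero) = R.zero := by
  have h1 : R.iSum (fun _ : ι => R.zero) = R.iSum (fun _ : ι => R.mul R.one R.zero) :=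
    iSum_congr R fun i => (hR.mul_zero _).symm
  rw [h1, ← hR.iSum_mul, hR.mul_zero]

lemma iSum_zero' (hR : R.IsComplete) {ι : Type} {f : ι → S} (h : ∀ i, f i = R.zero) :
    R.iSum f = R.zero := by
  rw [iSum_congr R h, iSum_zero hR]

lemma vSum_zero (hP : P.IsComplete R) {ι : Type} :
    P.vSum (fun _ : ι => P.vzero) = P.vzero := by
  have h1 : P.vSum (fun _ : ι => P.vzero) =
      P.vSum (fun _ : ι => P.smul R.zero P.vzero) :=
    vSum_congr P fun i => (hP.zero_smul _).symm
  rw [h1, ← hP.iSum_smul, hP.smul_vzero]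

lemma vSum_zero' (hP : P.IsComplete R) {ι : Type} {f : ι → V} (h : ∀ i, f i = P.vzero) :
    P.vSum f = P.vzero := by
  rw [vSum_congr P h, vSum_zero hP]

lemma iSum_equiv (hR : R.IsComplete) {ι κ : Type} (e : κ ≃ ι) (f : ι → S) :
    R.iSum f = R.iSum (fun k => f (e k)) := by
  have h := hR.iSum_partition (g := fun k : κ => e k) (f := fun k => f (e k))
  rw [← h]
  refine (iSum_congr R fun j => ?_)
  rw [hR.iSum_single _ ⟨e.symm j, e.apply_symm_apply j⟩
    (fun i => Subtype.ext (e.injective (by rw [i.2, e.apply_symm_apply])))]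
  simp

lemma vSum_equiv (hP : P.IsComplete R) {ι κ : Type} (e : κ ≃ ι) (f : ι → V) :
    P.vSum f = P.vSum (fun k => f (e k)) := by
  have h := hP.vSum_partition (g := fun k : κ => e k) (f := fun k => f (e k))
  rw [← h]
  refine (vSum_congr P fun j => ?_)
  rw [hP.vSum_single _ ⟨e.symm j, e.apply_symm_apply j⟩
    (fun i => Subtype.ext (e.injective (by rw [i.2, e.apply_symm_apply])))]
  simp

open Classical in
lemma iSum_split (hR : R.IsComplete) {ι : Type} (g : ι → Prop) (f : ι → S) :
    R.iSum f = R.add (R.iSum fun i : {i // g i} => f i.1)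
      (R.iSum fun i : {i // ¬ g i} => f i.1) := by
  have h := hR.iSum_partition (g := fun i : ι => (g i : Prop)) (f := f)
  rw [← h]
  rw [hR.iSum_pair _ True False (by simp) (fun p => by
    by_cases hp : p
    · exact Or.inl (eq_true hp)
    · exact Or.inr (eq_false hp))]
  congr 1
  · exact (iSum_equiv hR (⟨fun i => ⟨i.1, eq_true i.2⟩, fun i => ⟨i.1, of_eq_true i.2⟩,
      fun i => rfl, fun i => rfl⟩ : {i : ι // g i} ≃ {i : ι // g i = True}) _)
  · exact (iSum_equiv hR (⟨fun i => ⟨i.1, eq_false i.2⟩, fun i => ⟨i.1, by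
      have := i.2; simp at this; exact this⟩,
      fun i => rfl, fun i => rfl⟩ : {i : ι // ¬ g i} ≃ {i : ι // g i = False}) _)

open Classical in
lemma vSum_split (hP : P.IsComplete R) {ι : Type} (g : ι → Prop) (f : ι → V) :
    P.vSum f = P.vadd (P.vSum fun i : {i // g i} => f i.1)
      (P.vSum fun i : {i // ¬ g i} => f i.1) := by
  have h := hP.vSum_partition (g := fun i : ι => (g i : Prop)) (f := f)
  rw [← h]
  rw [hP.vSum_pair _ True False (by simp) (fun p => by
    by_cases hp : p
    · exact Or.inl (eq_true hp)
    · exact Or.inr (eq_false hp))]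
  congr 1
  · exact (vSum_equiv hP (⟨fun i => ⟨i.1, eq_true i.2⟩, fun i => ⟨i.1, of_eq_true i.2⟩,
      fun i => rfl, fun i => rfl⟩ : {i : ι // g i} ≃ {i : ι // g i = True}) _)
  · exact (vSum_equiv hP (⟨fun i => ⟨i.1, eq_false i.2⟩, fun i => ⟨i.1, by
      have := i.2; simp at this; exact this⟩,
      fun i => rfl, fun i => rfl⟩ : {i : ι // ¬ g i} ≃ {i : ι // g i = False}) _)

lemma iSum_eq_single (hR : R.IsComplete) {ι : Type} (f : ι → S) (i₀ : ι)
    (h : ∀ i, i ≠ i₀ → f i = R.zero) : R.iSum f = f i₀ := by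
  rw [iSum_split hR (fun i => i = i₀) f]
  rw [hR.iSum_single (fun i : {i // i = i₀} => f i.1) ⟨i₀, rfl⟩
    (fun i => Subtype.ext i.2)]
  rw [show (R.iSum fun i : {i // ¬ i = i₀} => f i.1) = R.zero from
    iSum_zero' hR (fun i => h i.1 i.2), r_add_zero hR]

lemma vSum_prod (hP : P.IsComplete R) {α β : Type} (f : α × β → V) :
    P.vSum f = P.vSum (fun a => P.vSum (fun b => f (a, b))) := by
  have h := hP.vSum_partition (g := fun x : α × β => x.1) (f := f)
  rw [← h]
  refine vSum_congr P fun a => ?_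
  exact vSum_equiv hP
    (⟨fun b => ⟨(a, b), rfl⟩, fun x => x.1.2, fun b => rfl,
      fun x => by rcases x with ⟨⟨a', b⟩, h⟩; cases h; rfl⟩ :
      β ≃ {x : α × β // x.1 = a}) _

lemma vSum_swap (hP : P.IsComplete R) {α β : Type} (f : α → β → V) :
    P.vSum (fun a => P.vSum (fun b => f a b)) =
    P.vSum (fun b => P.vSum (fun a => f a b)) := by
  rw [← vSum_prod hP (fun x : α × β => f x.1 x.2)]
  rw [vSum_equiv hP (Equiv.prodComm β α) (fun x : α × β => f x.1 x.2)]
  exact vSum_prod hP (fun x : β × α => f x.2 x.1)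

/-! Roc-matrix specific lemmas -/

/-- Prepend an element to a sequence. -/
def consF {α : Type} (a : α) (f : ℕ → α) : ℕ → α
  | 0 => a
  | t + 1 => f t

lemma Mrow0 {n : ℕ} {M : IMat n S} (hM : IsRoc R M) (j : ℕ) : M 0 j = bZero R :=
  hM.2 0 j (Or.inl rfl)

lemma Mshift {n : ℕ} {M : IMat n S} (hM : IsRoc R M) (a b : ℕ) (ha : 2 ≤ a) (hb : 1 ≤ b) :
    M a b = M (a - 1) (b - 1) := by
  obtain ⟨h1, h0⟩ := hM
  by_cases hab : b = a + 1
  · rw [hab, (h1 a (by omega)).1, show a + 1 - 1 = (a - 1) + 1 from by omega,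
      (h1 (a - 1) (by omega)).1]
  by_cases hab2 : b = a
  · rw [hab2, (h1 a (by omega)).2.1, (h1 (a - 1) (by omega)).2.1]
  by_cases hab3 : b + 1 = a
  · rw [show b = a - 1 from by omega, (h1 a (by omega)).2.2,
      show a - 1 - 1 = a - 1 - 1 from rfl]
    have := (h1 (a - 1) (by omega)).2.2
    rw [this]
  · rw [h0 a b (Or.inr ⟨hab, hab2, hab3⟩),
      h0 (a - 1) (b - 1) (Or.inr ⟨by omega, by omega, by omega⟩)]

lemma iProd_path_step (hP : P.IsComplete R) {n : ℕ} (M : IMat n S) (i : ℕ) (j : Fin n)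
    (hs : ℕ → ℕ) (js : ℕ → Fin n) :
    P.iProd (pathEntry M i j hs js) =
    P.smul (M i (hs 0) j (js 0))
      (P.iProd (pathEntry M (hs 0) (js 0) (fun t => hs (t + 1)) (fun t => js (t + 1)))) := by
  rw [← hP.smul_iProd_shift (pathEntry M i j hs js)]
  refine congrArg₂ P.smul rfl (congrArg P.iProd (funext fun t => ?_))
  cases t <;> rfl

lemma iProd_eq_vzero (hP : P.IsComplete R) (s : ℕ → S) (t : ℕ) (h : s t = R.zero) :
    P.iProd s = P.vzero := by
  induction t generalizing s with
  | zero => rw [← hP.smul_iProd_shift s, h, hP.zero_smul]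
  | succ u ih => rw [← hP.smul_iProd_shift s, ih _ h, hP.smul_vzero]

lemma w_vzero_of_level0 (hP : P.IsComplete R) {n : ℕ} {M : IMat n S} (hM : IsRoc R M)
    (i : ℕ) (j : Fin n) (hs : ℕ → ℕ) (js : ℕ → Fin n) (t : ℕ) (h : hs t = 0) :
    P.iProd (pathEntry M i j hs js) = P.vzero := by
  apply iProd_eq_vzero hP _ (t + 1)
  show M (hs t) (hs (t + 1)) (js t) (js (t + 1)) = R.zero
  rw [h, Mrow0 hM]
  rfl

lemma pow_row0 (hR : R.IsComplete) {n : ℕ} {M : IMat n S} (hM : IsRoc R M)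
    (u : ℕ) (jc : ℕ) (a b : Fin n) : iMatPow R M (u + 1) 0 jc a b = R.zero := by
  show R.iSum (fun l : ℕ => bMul R (M 0 l) (iMatPow R M u l jc) a b) = R.zero
  refine iSum_zero' hR fun l => ?_
  refine iSum_zero' hR fun c => ?_
  rw [Mrow0 hM]
  exact hR.zero_mul _

lemma pow_one_entry (hR : R.IsComplete) {n : ℕ} (M : IMat n S) (k l : ℕ) (a b : Fin n) :
    iMatPow R M 1 k l a b = M k l a b := by
  show R.iSum (fun lv : ℕ => bMul R (M k lv) (iMatOne R lv l) a b) = _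
  rw [iSum_eq_single hR _ l ?side]
  case side =>
    intro lv hlv
    refine iSum_zero' hR fun c => ?_
    have h1 : iMatOne R lv l c b = R.zero := by simp [iMatOne, bZero, hlv]
    rw [h1, hR.mul_zero]
  show R.iSum (fun c : Fin n => R.mul (M k l a c) (iMatOne R l l c b)) = _
  rw [iSum_eq_single hR _ b ?side2]
  case side2 =>
    intro c hc
    have h1 : iMatOne R l l c b = R.zero := by simp [iMatOne, bOne, hc]
    rw [h1, hR.mul_zero]
  have h2 : iMatOne R l l b b = R.one := by simp [iMatOne, bOne]
  rw [h2, hR.mul_one]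

/-! The key lemma -/

/-- The space of infinite paths: level sequence and state sequence. -/
abbrev PathSp (n : ℕ) := (ℕ → ℕ) × (ℕ → Fin n)

/-- Paths staying at level `≥ 2` before time `t` and at level `1` at time `t`. -/
abbrev GT (n t : ℕ) := {q : PathSp n // (∀ s, s < t → 2 ≤ q.1 s) ∧ q.1 t = 1}

def e0 (n : ℕ) : (Fin n × PathSp n) ≃ GT n 0 where
  toFun x := ⟨(consF 1 x.2.1, consF x.1 x.2.2),
    ⟨fun s hs => absurd hs (Nat.not_lt_zero s), rfl⟩⟩
  invFun q := (q.1.2 0, (fun u => q.1.1 (u + 1), fun u => q.1.2 (u + 1)))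
  left_inv x := rfl
  right_inv q := Subtype.ext (Prod.ext
    (funext fun u => by cases u with | zero => exact q.2.2.symm | succ u => rfl)
    (funext fun u => by cases u <;> rfl))

def eS (n t : ℕ) : ({k' : ℕ // 2 ≤ k'} × Fin n × GT n t) ≃ GT n (t + 1) where
  toFun x := ⟨(consF x.1.1 x.2.2.1.1, consF x.2.1 x.2.2.1.2),
    ⟨fun s hs => by
        cases s with
        | zero => exact x.1.2
        | succ s => exact x.2.2.2.1 s (by omega),
     x.2.2.2.2⟩⟩
  invFun q := (⟨q.1.1 0, q.2.1 0 (Nat.succ_pos t)⟩, q.1.2 0,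
    ⟨(fun u => q.1.1 (u + 1), fun u => q.1.2 (u + 1)),
     ⟨fun s hs => q.2.1 (s + 1) (by omega), q.2.2⟩⟩)
  left_inv x := rfl
  right_inv q := Subtype.ext (Prod.ext
    (funext fun u => by cases u <;> rfl)
    (funext fun u => by cases u <;> rfl))

def e6 : {k' : ℕ // 2 ≤ k'} ≃ {lv : ℕ // 1 ≤ lv} where
  toFun x := ⟨x.1 - 1, by have := x.2; omega⟩
  invFun x := ⟨x.1 + 1, by omega⟩
  left_inv x := Subtype.ext (by show x.1 - 1 + 1 = x.1; have := x.2; omega)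
  right_inv x := Subtype.ext (by show x.1 + 1 - 1 = x.1; omega)

lemma keyLemma (hR : R.IsComplete) (hP : P.IsComplete R) {n : ℕ} {M : IMat n S}
    (hM : IsRoc R M) (t : ℕ) :
    ∀ k : ℕ, 2 ≤ k → ∀ j : Fin n,
      (P.vSum fun q : GT n t => P.iProd (pathEntry M k j q.1.1 q.1.2)) =
      P.vSum fun l : Fin n =>
        P.smul (iMatPow R M (t + 1) (k - 1) 0 j l) (mOmega P M 1 l) := by
  induction t with
  | zero =>
    intro k hk j
    calc P.vSum (fun q : GT n 0 => P.iProd (pathEntry M k j q.1.1 q.1.2))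
        = P.vSum (fun x : Fin n × PathSp n =>
            P.iProd (pathEntry M k j ((e0 n) x).1.1 ((e0 n) x).1.2)) :=
          vSum_equiv hP (e0 n) _
      _ = P.vSum (fun x : Fin n × PathSp n =>
            P.smul (M k 1 j x.1) (P.iProd (pathEntry M 1 x.1 x.2.1 x.2.2))) :=
          vSum_congr P fun x => iProd_path_step hP M k j (consF 1 x.2.1) (consF x.1 x.2.2)
      _ = P.vSum (fun l : Fin n => P.vSum (fun q : PathSp n =>
            P.smul (M k 1 j l) (P.iProd (pathEntry M 1 l q.1 q.2)))) :=
          vSum_prod hP _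
      _ = P.vSum (fun l : Fin n => P.smul (M k 1 j l) (mOmega P M 1 l)) :=
          vSum_congr P fun l => (hP.smul_vSum _ _).symm
      _ = P.vSum (fun l : Fin n =>
            P.smul (iMatPow R M (0 + 1) (k - 1) 0 j l) (mOmega P M 1 l)) := by
          refine vSum_congr P fun l => ?_
          have h2 : M k 1 = M (k - 1) 0 := by
            have := Mshift (R := R) hM k 1 hk le_rfl
            simpa using this
          have h3 : iMatPow R M (0 + 1) (k - 1) 0 j l = M k 1 j l := by
            rw [show (0 + 1) = 1 from rfl, pow_one_entry hR M, h2]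
          rw [h3]
  | succ t ih =>
    intro k hk j
    calc P.vSum (fun q : GT n (t + 1) => P.iProd (pathEntry M k j q.1.1 q.1.2))
        = P.vSum (fun x : {k' : ℕ // 2 ≤ k'} × Fin n × GT n t =>
            P.iProd (pathEntry M k j ((eS n t) x).1.1 ((eS n t) x).1.2)) :=
          vSum_equiv hP (eS n t) _
      _ = P.vSum (fun x : {k' : ℕ // 2 ≤ k'} × Fin n × GT n t =>
            P.smul (M k x.1.1 j x.2.1)
              (P.iProd (pathEntry M x.1.1 x.2.1 x.2.2.1.1 x.2.2.1.2))) :=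
          vSum_congr P fun x => iProd_path_step hP M k j _ _
      _ = P.vSum (fun k' : {k' : ℕ // 2 ≤ k'} =>
            P.vSum (fun y : Fin n × GT n t =>
              P.smul (M k k'.1 j y.1)
                (P.iProd (pathEntry M k'.1 y.1 y.2.1.1 y.2.1.2)))) :=
          vSum_prod hP _
      _ = P.vSum (fun k' : {k' : ℕ // 2 ≤ k'} => P.vSum (fun c : Fin n =>
            P.vSum (fun q : GT n t =>
              P.smul (M k k'.1 j c) (P.iProd (pathEntry M k'.1 c q.1.1 q.1.2))))) :=
          vSum_congr P fun k' => vSum_prod hP _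
      _ = P.vSum (fun k' : {k' : ℕ // 2 ≤ k'} => P.vSum (fun c : Fin n =>
            P.smul (M k k'.1 j c)
              (P.vSum fun q : GT n t => P.iProd (pathEntry M k'.1 c q.1.1 q.1.2)))) :=
          vSum_congr P fun k' => vSum_congr P fun c => (hP.smul_vSum _ _).symm
      _ = P.vSum (fun k' : {k' : ℕ // 2 ≤ k'} => P.vSum (fun c : Fin n =>
            P.smul (M k k'.1 j c) (P.vSum fun l : Fin n =>
              P.smul (iMatPow R M (t + 1) (k'.1 - 1) 0 c l) (mOmega P M 1 l)))) :=
          vSum_congr P fun k' => vSum_congr P fun c => by rw [ih k'.1 k'.2 c]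
      _ = P.vSum (fun k' : {k' : ℕ // 2 ≤ k'} => P.vSum (fun c : Fin n =>
            P.vSum (fun l : Fin n => P.smul (M k k'.1 j c)
              (P.smul (iMatPow R M (t + 1) (k'.1 - 1) 0 c l) (mOmega P M 1 l))))) :=
          vSum_congr P fun k' => vSum_congr P fun c => hP.smul_vSum _ _
      _ = P.vSum (fun k' : {k' : ℕ // 2 ≤ k'} => P.vSum (fun c : Fin n =>
            P.vSum (fun l : Fin n => P.smul (M (k - 1) (k'.1 - 1) j c)
              (P.smul (iMatPow R M (t + 1) (k'.1 - 1) 0 c l) (mOmega P M 1 l))))) :=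
          vSum_congr P fun k' => vSum_congr P fun c => vSum_congr P fun l => by
            rw [Mshift (R := R) hM k k'.1 hk (by have := k'.2; omega)]
      _ = P.vSum (fun lv : {lv : ℕ // 1 ≤ lv} => P.vSum (fun c : Fin n =>
            P.vSum (fun l : Fin n => P.smul (M (k - 1) lv.1 j c)
              (P.smul (iMatPow R M (t + 1) lv.1 0 c l) (mOmega P M 1 l))))) :=
          (vSum_equiv hP e6 (fun lv : {lv : ℕ // 1 ≤ lv} => P.vSum (fun c : Fin n =>
            P.vSum (fun l : Fin n => P.smul (M (k - 1) lv.1 j c)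
              (P.smul (iMatPow R M (t + 1) lv.1 0 c l) (mOmega P M 1 l)))))).symm
      _ = P.vSum (fun lv : ℕ => P.vSum (fun c : Fin n =>
            P.vSum (fun l : Fin n => P.smul (M (k - 1) lv j c)
              (P.smul (iMatPow R M (t + 1) lv 0 c l) (mOmega P M 1 l))))) := by
          rw [vSum_split hP (fun lv : ℕ => 1 ≤ lv) (fun lv : ℕ => P.vSum (fun c : Fin n =>
            P.vSum (fun l : Fin n => P.smul (M (k - 1) lv j c)
              (P.smul (iMatPow R M (t + 1) lv 0 c l) (mOmega P M 1 l)))))]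
          have hz : (P.vSum fun lv : {lv : ℕ // ¬ 1 ≤ lv} => P.vSum (fun c : Fin n =>
              P.vSum (fun l : Fin n => P.smul (M (k - 1) lv.1 j c)
                (P.smul (iMatPow R M (t + 1) lv.1 0 c l) (mOmega P M 1 l))))) = P.vzero := by
            refine vSum_zero' hP fun lv => ?_
            have h0 : lv.1 = 0 := by have := lv.2; omega
            rw [h0]
            refine vSum_zero' hP fun c => ?_
            refine vSum_zero' hP fun l => ?_
            rw [pow_row0 hR hM t 0 c l, hP.zero_smul, hP.smul_vzero]
          rw [hz, vadd_vzero hP]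
      _ = P.vSum (fun lv : ℕ => P.vSum (fun l : Fin n =>
            P.vSum (fun c : Fin n => P.smul (M (k - 1) lv j c)
              (P.smul (iMatPow R M (t + 1) lv 0 c l) (mOmega P M 1 l))))) :=
          vSum_congr P fun lv => vSum_swap hP _
      _ = P.vSum (fun l : Fin n => P.vSum (fun lv : ℕ =>
            P.vSum (fun c : Fin n => P.smul (M (k - 1) lv j c)
              (P.smul (iMatPow R M (t + 1) lv 0 c l) (mOmega P M 1 l))))) :=
          vSum_swap hP _
      _ = P.vSum (fun l : Fin n => P.vSum (fun lv : ℕ =>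
            P.vSum (fun c : Fin n =>
              P.smul (R.mul (M (k - 1) lv j c) (iMatPow R M (t + 1) lv 0 c l))
                (mOmega P M 1 l)))) :=
          vSum_congr P fun l => vSum_congr P fun lv => vSum_congr P fun c =>
            (hP.mul_smul _ _ _).symm
      _ = P.vSum (fun l : Fin n => P.vSum (fun lv : ℕ =>
            P.smul (R.iSum fun c : Fin n =>
                R.mul (M (k - 1) lv j c) (iMatPow R M (t + 1) lv 0 c l))
              (mOmega P M 1 l))) :=
          vSum_congr P fun l => vSum_congr P fun lv => (hP.iSum_smul _ _).symm
      _ = P.vSum (fun l : Fin n =>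
            P.smul (R.iSum fun lv : ℕ => R.iSum fun c : Fin n =>
                R.mul (M (k - 1) lv j c) (iMatPow R M (t + 1) lv 0 c l))
              (mOmega P M 1 l)) :=
          vSum_congr P fun l => (hP.iSum_smul _ _).symm
      _ = P.vSum (fun l : Fin n =>
            P.smul (iMatPow R M (t + 1 + 1) (k - 1) 0 j l) (mOmega P M 1 l)) := rfl

/-! Equivalences for the main proof -/

def eFind (n t : ℕ) : {q : PathSp n // (∀ s, s < t → 2 ≤ q.1 s) ∧ q.1 t ≤ 1} ≃
    {x : {q : PathSp n // ∃ u, q.1 u ≤ 1} // Nat.find x.2 = t} where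
  toFun x := ⟨⟨x.1, ⟨t, x.2.2⟩⟩, by
    rw [Nat.find_eq_iff]
    exact ⟨x.2.2, fun s hs hle => by
      have hle' : x.1.1 s ≤ 1 := hle
      have := x.2.1 s hs; omega⟩⟩
  invFun y := ⟨y.1.1, ⟨fun s hs => by
      have hmin := Nat.find_min y.1.2 (show s < Nat.find y.1.2 from by rw [y.2]; exact hs)
      omega,
    by have hspec := Nat.find_spec y.1.2; rwa [y.2] at hspec⟩⟩
  left_inv x := rfl
  right_inv y := Subtype.ext (Subtype.ext rfl)

def eGT (n t : ℕ) : GT n t ≃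
    {x : {q : PathSp n // (∀ s, s < t → 2 ≤ q.1 s) ∧ q.1 t ≤ 1} // x.1.1 t = 1} where
  toFun q := ⟨⟨q.1, ⟨q.2.1, le_of_eq q.2.2⟩⟩, q.2.2⟩
  invFun x := ⟨x.1.1, ⟨x.1.2.1, x.2⟩⟩
  left_inv q := rfl
  right_inv x := rfl

def eNH (n : ℕ) : {q : PathSp n // ∀ t, 1 ≤ q.1 t} ≃ {q : PathSp n // ¬ ∃ t, q.1 t ≤ 1} where
  toFun x := ⟨(fun t => x.1.1 t + 1, x.1.2), fun h => by
    obtain ⟨t, ht⟩ := h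
    have ht' : x.1.1 t + 1 ≤ 1 := ht
    have := x.2 t; omega⟩
  invFun x := ⟨(fun t => x.1.1 t - 1, x.1.2), fun t => by
    show 1 ≤ x.1.1 t - 1
    have h1 : ¬ (x.1.1 t ≤ 1) := fun h => x.2 ⟨t, h⟩
    omega⟩
  left_inv x := Subtype.ext (Prod.ext (funext fun t => by
    show x.1.1 t + 1 - 1 = x.1.1 t; omega) rfl)
  right_inv x := Subtype.ext (Prod.ext (funext fun t => by
    show x.1.1 t - 1 + 1 = x.1.1 t
    have h1 : ¬ (x.1.1 t ≤ 1) := fun h => x.2 ⟨t, h⟩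
    omega) rfl)

def eSucc : ℕ ≃ {m : ℕ // ¬ m = 0} where
  toFun t := ⟨t + 1, Nat.succ_ne_zero t⟩
  invFun m := m.1 - 1
  left_inv t := rfl
  right_inv m := Subtype.ext (by show m.1 - 1 + 1 = m.1; have := m.2; omega)

end Aux

/-- Let `(S, V)` be a complete semiring-semimodule pair and
`M ∈ (S^{n×n})^{p*×p*}` a roc matrix with counter symbol `p`. Then
`(M^ω)_{p²} = (M^ω)_p + (M*)_{p,ε} · (M^ω)_p`. -/
theorem stmt_2 {S V : Type} (R : CSOps S) (P : CPOps S V) (hR : R.IsComplete)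
    (hP : P.IsComplete R) {n : ℕ} (hn : 1 ≤ n) (M : IMat n S) (hM : IsRoc R M) :
    mOmega P M 2 = vecAdd P (mOmega P M 1) (matVec P (iStar R M 1 0) (mOmega P M 1)) := by
  funext j
  show mOmega P M 2 j =
    P.vadd (mOmega P M 1 j) (matVec P (iStar R M 1 0) (mOmega P M 1) j)
  -- (I) the omega block at `p` equals the sum over paths never visiting level 0
  have hI : mOmega P M 1 j =
      P.vSum (fun q : {q : PathSp n // ∀ t, 1 ≤ q.1 t} =>
        P.iProd (pathEntry M 1 j q.1.1 q.1.2)) := by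
    refine (vSum_split hP (fun q : PathSp n => ∀ t, 1 ≤ q.1 t)
      (fun q => P.iProd (pathEntry M 1 j q.1 q.2))).trans ?_
    refine Eq.trans (congrArg (P.vadd _) (vSum_zero' hP fun q => ?_)) (vadd_vzero hP _)
    obtain ⟨t, ht⟩ := not_forall.mp q.2
    exact w_vzero_of_level0 hP hM 1 j q.1.1 q.1.2 t (by omega)
  -- (II) paths from `p²` never reaching level ≤ 1 sum to the omega block at `p`
  have hNoHit : (P.vSum fun q : {q : PathSp n // ¬ ∃ t, q.1 t ≤ 1} =>
      P.iProd (pathEntry M 2 j q.1.1 q.1.2)) = mOmega P M 1 j := by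
    rw [vSum_equiv hP (eNH n) (fun q : {q : PathSp n // ¬ ∃ t, q.1 t ≤ 1} =>
      P.iProd (pathEntry M 2 j q.1.1 q.1.2)), hI]
    refine vSum_congr P fun x => ?_
    refine congrArg P.iProd (funext fun u => ?_)
    cases u with
    | zero =>
      show M 2 (x.1.1 0 + 1) j (x.1.2 0) = M 1 (x.1.1 0) j (x.1.2 0)
      have h : M 2 (x.1.1 0 + 1) = M 1 (x.1.1 0) := by
        have h' := Mshift (R := R) hM 2 (x.1.1 0 + 1) le_rfl (by omega)
        simpa using h'
      rw [h]
    | succ u =>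
      show M (x.1.1 u + 1) (x.1.1 (u + 1) + 1) (x.1.2 u) (x.1.2 (u + 1)) =
        M (x.1.1 u) (x.1.1 (u + 1)) (x.1.2 u) (x.1.2 (u + 1))
      have h : M (x.1.1 u + 1) (x.1.1 (u + 1) + 1) = M (x.1.1 u) (x.1.1 (u + 1)) := by
        have h' := Mshift (R := R) hM (x.1.1 u + 1) (x.1.1 (u + 1) + 1)
          (by have := x.2 u; omega) (by omega)
        simpa using h'
      rw [h]
  -- (III) the fibers of the first-hitting-time partition
  have hfib : ∀ t : ℕ,
      (P.vSum fun x : {x : {q : PathSp n // ∃ u, q.1 u ≤ 1} // Nat.find x.2 = t} =>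
        P.iProd (pathEntry M 2 j x.1.1.1 x.1.1.2)) =
      P.vSum fun q : GT n t => P.iProd (pathEntry M 2 j q.1.1 q.1.2) := by
    intro t
    refine Eq.trans (vSum_equiv hP (eFind n t)
      (fun x => P.iProd (pathEntry M 2 j x.1.1.1 x.1.1.2))) ?_
    refine Eq.trans (vSum_split hP
      (fun x : {q : PathSp n // (∀ s, s < t → 2 ≤ q.1 s) ∧ q.1 t ≤ 1} => x.1.1 t = 1)
      _) ?_
    refine Eq.trans (congrArg (P.vadd _) (vSum_zero' hP fun x => ?_)) ?_
    · refine w_vzero_of_level0 hP hM 2 j x.1.1.1 x.1.1.2 t ?_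
      have h1 := x.1.2.2
      have h2 := x.2
      omega
    refine Eq.trans (vadd_vzero hP _) ?_
    exact vSum_equiv hP (eGT n t) _
  -- (IV) the star part
  have hstar : matVec P (iStar R M 1 0) (mOmega P M 1) j =
      P.vSum (fun t : ℕ => P.vSum (fun l : Fin n =>
        P.smul (iMatPow R M (t + 1) 1 0 j l) (mOmega P M 1 l))) := by
    calc matVec P (iStar R M 1 0) (mOmega P M 1) j
        = P.vSum (fun l : Fin n =>
            P.smul (R.iSum fun m : ℕ => iMatPow R M m 1 0 j l) (mOmega P M 1 l)) := rfl
      _ = P.vSum (fun l : Fin n => P.vSum (fun m : ℕ =>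
            P.smul (iMatPow R M m 1 0 j l) (mOmega P M 1 l))) :=
          vSum_congr P fun l => hP.iSum_smul _ _
      _ = P.vSum (fun m : ℕ => P.vSum (fun l : Fin n =>
            P.smul (iMatPow R M m 1 0 j l) (mOmega P M 1 l))) := vSum_swap hP _
      _ = P.vadd
            (P.vSum (fun i : {m : ℕ // m = 0} => P.vSum (fun l : Fin n =>
              P.smul (iMatPow R M i.1 1 0 j l) (mOmega P M 1 l))))
            (P.vSum (fun i : {m : ℕ // ¬ m = 0} => P.vSum (fun l : Fin n =>
              P.smul (iMatPow R M i.1 1 0 j l) (mOmega P M 1 l)))) :=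
          vSum_split hP (fun m : ℕ => m = 0) _
      _ = P.vadd P.vzero
            (P.vSum (fun i : {m : ℕ // ¬ m = 0} => P.vSum (fun l : Fin n =>
              P.smul (iMatPow R M i.1 1 0 j l) (mOmega P M 1 l)))) := by
          refine congrArg (fun z => P.vadd z _) ?_
          rw [hP.vSum_single _ (⟨0, rfl⟩ : {m : ℕ // m = 0}) (fun i => Subtype.ext i.2)]
          refine vSum_zero' hP fun l => ?_
          have h0 : iMatPow R M 0 1 0 j l = R.zero := by
            show iMatOne R 1 0 j l = R.zero
            simp [iMatOne, bZero]
          rw [h0, hP.zero_smul]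
      _ = P.vSum (fun i : {m : ℕ // ¬ m = 0} => P.vSum (fun l : Fin n =>
            P.smul (iMatPow R M i.1 1 0 j l) (mOmega P M 1 l))) := hP.vzero_vadd _
      _ = P.vSum (fun t : ℕ => P.vSum (fun l : Fin n =>
            P.smul (iMatPow R M (t + 1) 1 0 j l) (mOmega P M 1 l))) :=
          vSum_equiv hP eSucc _
  -- final assembly
  calc mOmega P M 2 j
      = P.vadd
          (P.vSum (fun q : {q : PathSp n // ∃ t, q.1 t ≤ 1} =>
            P.iProd (pathEntry M 2 j q.1.1 q.1.2)))
          (P.vSum (fun q : {q : PathSp n // ¬ ∃ t, q.1 t ≤ 1} =>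
            P.iProd (pathEntry M 2 j q.1.1 q.1.2))) :=
        vSum_split hP (fun q : PathSp n => ∃ t, q.1 t ≤ 1)
          (fun q => P.iProd (pathEntry M 2 j q.1 q.2))
    _ = P.vadd
          (P.vSum (fun q : {q : PathSp n // ∃ t, q.1 t ≤ 1} =>
            P.iProd (pathEntry M 2 j q.1.1 q.1.2)))
          (mOmega P M 1 j) := congrArg (P.vadd _) hNoHit
    _ = P.vadd
          (P.vSum (fun t : ℕ => P.vSum (fun q : GT n t =>
            P.iProd (pathEntry M 2 j q.1.1 q.1.2))))
          (mOmega P M 1 j) := by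
        refine congrArg (fun z => P.vadd z (mOmega P M 1 j)) ?_
        have hpart := hP.vSum_partition
          (g := fun q : {q : PathSp n // ∃ u, q.1 u ≤ 1} => Nat.find q.2)
          (f := fun q : {q : PathSp n // ∃ u, q.1 u ≤ 1} =>
            P.iProd (pathEntry M 2 j q.1.1 q.1.2))
        exact hpart.symm.trans (vSum_congr P hfib)
    _ = P.vadd
          (P.vSum (fun t : ℕ => P.vSum (fun l : Fin n =>
            P.smul (iMatPow R M (t + 1) 1 0 j l) (mOmega P M 1 l))))
          (mOmega P M 1 j) := by
        refine congrArg (fun z => P.vadd z (mOmega P M 1 j)) (vSum_congr P fun t => ?_)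
        have h := keyLemma hR hP hM t 2 le_rfl j
        norm_num at h
        exact h
    _ = P.vadd (matVec P (iStar R M 1 0) (mOmega P M 1) j) (mOmega P M 1 j) :=
        congrArg (fun z => P.vadd z (mOmega P M 1 j)) hstar.symm
    _ = P.vadd (mOmega P M 1 j) (matVec P (iStar R M 1 0) (mOmega P M 1) j) :=
        hP.vadd_comm _ _
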